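/- arXiv:1803.07290 — 2 statements merged into one kernel-verified Lean document; each statement's English description precedes it below -/
import Mathlib

section
/- Let a < b, M : [a,b] → ℝ continuous, u : [a,b] → ℝ continuous. Then ∫ₐᵇ (∫ₐ^s (s-η)·u(η) dη) · M(s) · (∫ₐ^s (s-ζ)·u(ζ) dζ) ds = ∫ₐᵇ ∫ₐᵇ u(s) · K(s,θ) · u(θ) dθ ds, where K(s,θ) = I(s-θ)·∫_s^b (η-s)(η-θ)·M(η) dη + I(θ-s)·∫_θ^b (η-s)(η-θ)·M(η) dη. -/
/-!
Write `∫ₐ^s (s - η) u(η) dη = ∫_{[a,b]} (s - η)⁺ u(η) dη`. The left side is then the integral of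
`M(s) (s - η)⁺ u(η) (s - θ)⁺ u(θ)` over the cube `[a,b]³`, where it is continuous and hence
integrable, so by Fubini the `s`-integration may be done first; it runs over `s ≥ max η θ`.
Off the null diagonal `η = θ` exactly one indicator in the kernel is `1`, and it selects this
integral (on the diagonal both are `1`, so the identity only holds after integration).
-/

open MeasureTheory Set

noncomputable def ind (x : ℝ) : ℝ := if 0 ≤ x then 1 else 0

theorem ContinuousOn.integrable_restrict_prod {X Y E : Type*} [TopologicalSpace X]
    [TopologicalSpace Y] [T2Space X] [T2Space Y] [MeasurableSpace X] [MeasurableSpace Y]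
    [OpensMeasurableSpace X] [OpensMeasurableSpace Y] [SecondCountableTopologyEither X Y]
    [NormedAddCommGroup E] {μ : Measure X} {ν : Measure Y} [SFinite μ] [SFinite ν]
    [IsFiniteMeasureOnCompacts μ] [IsFiniteMeasureOnCompacts ν] {s : Set X} {t : Set Y}
    (hs : IsCompact s) (ht : IsCompact t) {f : X × Y → E} (hf : ContinuousOn f (s ×ˢ t)) :
    Integrable f ((μ.restrict s).prod (ν.restrict t)) := by
  rw [Measure.prod_restrict]
  exact hf.integrableOn_compact (hs.prod ht)

theorem integrable_mul_kernel_mul_kernel {X 𝕜 : Type*} [TopologicalSpace X] [T2Space X]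
    [SecondCountableTopology X] [MeasurableSpace X] [OpensMeasurableSpace X] [RCLike 𝕜]
    {μ : Measure X} [SFinite μ] [IsFiniteMeasureOnCompacts μ] {s : Set X} (hs : IsCompact s)
    {M : X → 𝕜} {k : X → X → 𝕜} (hM : ContinuousOn M s)
    (hk : ContinuousOn (Function.uncurry k) (s ×ˢ s)) :
    Integrable (fun p : X × X × X => M p.1 * (k p.1 p.2.1 * k p.1 p.2.2))
      ((μ.restrict s).prod ((μ.restrict s).prod (μ.restrict s))) := by
  rw [Measure.prod_restrict s s]
  refine ContinuousOn.integrable_restrict_prod hs (hs.prod hs) ?_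
  exact (hM.comp continuousOn_fst fun p hp => hp.1).mul
    ((hk.comp (f := fun p : X × X × X => (p.1, p.2.1)) (by fun_prop)
        fun p hp => ⟨hp.1, hp.2.1⟩).mul
      (hk.comp (f := fun p : X × X × X => (p.1, p.2.2)) (by fun_prop)
        fun p hp => ⟨hp.1, hp.2.2⟩))

theorem integral_integral_mul_integral_swap {α 𝕜 : Type*} [MeasurableSpace α] [RCLike 𝕜]
    {μ : Measure α} [SFinite μ] (M : α → 𝕜) (k : α → α → 𝕜)
    (hF : Integrable (fun p : α × α × α => M p.1 * (k p.1 p.2.1 * k p.1 p.2.2))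
      (μ.prod (μ.prod μ))) :
    ∫ s, (∫ η, k s η ∂μ) * M s * (∫ θ, k s θ ∂μ) ∂μ
      = ∫ η, ∫ θ, ∫ s, M s * (k s η * k s θ) ∂μ ∂μ ∂μ := by
  calc ∫ s, (∫ η, k s η ∂μ) * M s * (∫ θ, k s θ ∂μ) ∂μ
      = ∫ s, ∫ z, M s * (k s z.1 * k s z.2) ∂(μ.prod μ) ∂μ := by
        congr with s
        rw [integral_const_mul, integral_prod_mul]
        ring
    _ = ∫ z, ∫ s, M s * (k s z.1 * k s z.2) ∂μ ∂(μ.prod μ) := integral_integral_swap hF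
    _ = ∫ η, ∫ θ, ∫ s, M s * (k s η * k s θ) ∂μ ∂μ ∂μ := integral_prod _ hF.integral_prod_right

section

variable {a b : ℝ}

theorem intervalIntegral_eq_setIntegral_Icc_max (u : ℝ → ℝ) {s : ℝ} (has : a ≤ s)
    (hsb : s ≤ b) :
    ∫ η in a..s, (s - η) * u η = ∫ η in Icc a b, max (s - η) 0 * u η := by
  have hmax : ∀ η, max (s - η) 0 * u η = (Iic s).indicator (fun η => (s - η) * u η) η := by
    intro η
    by_cases h : η ≤ s
    · simp [h]
    · simp [h, (not_le.1 h).le]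
  have hset : Icc a b ∩ Iic s = Icc a s := by
    ext η
    simp only [mem_inter_iff, mem_Icc, mem_Iic]
    grind
  rw [intervalIntegral.integral_of_le has, ← integral_Icc_eq_integral_Ioc]
  simp_rw [hmax, setIntegral_indicator measurableSet_Iic, hset]

theorem setIntegral_Icc_max_mul_max (M : ℝ → ℝ) {η θ : ℝ} (ha : a ≤ max η θ)
    (hb : max η θ ≤ b) :
    ∫ s in Icc a b, max (s - η) 0 * max (s - θ) 0 * M s
      = ∫ s in max η θ..b, (s - η) * (s - θ) * M s := by
  have hmax : ∀ s, max (s - η) 0 * max (s - θ) 0 * M s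
      = (Ioi (max η θ)).indicator (fun s => (s - η) * (s - θ) * M s) s := by
    intro s
    by_cases h : max η θ < s
    · rw [max_lt_iff] at h
      simp [h, h.1.le, h.2.le]
    · rw [max_lt_iff, not_and_or, not_lt, not_lt] at h
      rcases h with h | h <;> simp [h]
  have hset : Icc a b ∩ Ioi (max η θ) = Ioc (max η θ) b := by
    ext s
    simp only [mem_inter_iff, mem_Icc, mem_Ioi, mem_Ioc]
    grind
  rw [intervalIntegral.integral_of_le hb]
  simp_rw [hmax, setIntegral_indicator measurableSet_Ioi, hset]

theorem ind_mul_add_ind_mul {η θ : ℝ} (h : η ≠ θ) (J : ℝ → ℝ) :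
    ind (η - θ) * J η + ind (θ - η) * J θ = J (max η θ) := by
  rcases h.lt_or_gt with h | h
  · simp [ind, h.le, not_le.2 h]
  · simp [ind, h.le, not_le.2 h]

theorem setIntegral_Icc_mul_max_mul_max (M u : ℝ → ℝ) {η θ : ℝ} (hη : η ∈ Icc a b)
    (hθ : θ ≤ b) (hne : η ≠ θ) :
    ∫ s in Icc a b, M s * (max (s - η) 0 * u η * (max (s - θ) 0 * u θ))
      = u η * (ind (η - θ) * (∫ s in η..b, (s - η) * (s - θ) * M s)
          + ind (θ - η) * (∫ s in θ..b, (s - η) * (s - θ) * M s)) * u θ := by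
  calc ∫ s in Icc a b, M s * (max (s - η) 0 * u η * (max (s - θ) 0 * u θ))
      = u η * u θ * ∫ s in Icc a b, max (s - η) 0 * max (s - θ) 0 * M s := by
        rw [← integral_const_mul]
        congr with s
        ring
    _ = u η * u θ * ∫ s in max η θ..b, (s - η) * (s - θ) * M s := by
        rw [setIntegral_Icc_max_mul_max M (le_max_of_le_left hη.1) (max_le hη.2 hθ)]
    _ = _ := by
        rw [← ind_mul_add_ind_mul hne fun c => ∫ s in c..b, (s - η) * (s - θ) * M s]
        ring

end

theorem stmt15 (a b : ℝ) (hab : a < b) (M u : ℝ → ℝ)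
    (hM : ContinuousOn M (Set.Icc a b)) (hu : ContinuousOn u (Set.Icc a b)) :
    ∫ s in a..b, (∫ η in a..s, (s - η) * u η) * M s * (∫ ζ in a..s, (s - ζ) * u ζ)
      = ∫ s in a..b, ∫ θ in a..b,
          u s * (ind (s - θ) * (∫ η in s..b, (η - s) * (η - θ) * M η)
                 + ind (θ - s) * (∫ η in θ..b, (η - s) * (η - θ) * M η)) * u θ := by
  have hk : ContinuousOn (Function.uncurry fun s η => max (s - η) 0 * u η)
      (Icc a b ×ˢ Icc a b) :=
    (by fun_prop : Continuous fun p : ℝ × ℝ => max (p.1 - p.2) 0).continuousOn.mul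
      (hu.comp continuousOn_snd fun p hp => hp.2)
  simp only [intervalIntegral.integral_of_le hab.le, ← integral_Icc_eq_integral_Ioc]
  calc ∫ s in Icc a b, (∫ η in a..s, (s - η) * u η) * M s * (∫ ζ in a..s, (s - ζ) * u ζ)
      = ∫ s in Icc a b, (∫ η in Icc a b, max (s - η) 0 * u η) * M s
          * (∫ θ in Icc a b, max (s - θ) 0 * u θ) :=
        setIntegral_congr_fun measurableSet_Icc fun s hs => by
          simp only [intervalIntegral_eq_setIntegral_Icc_max u hs.1 hs.2]
    _ = ∫ η in Icc a b, ∫ θ in Icc a b, ∫ s in Icc a b,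
          M s * (max (s - η) 0 * u η * (max (s - θ) 0 * u θ)) :=
        integral_integral_mul_integral_swap M _
          (integrable_mul_kernel_mul_kernel isCompact_Icc hM hk)
    _ = _ := setIntegral_congr_fun measurableSet_Icc fun η hη => integral_congr_ae <| by
        filter_upwards [ae_restrict_mem measurableSet_Icc, ae_restrict_of_ae (volume.ae_ne η)]
          with θ hθ hne
        exact setIntegral_Icc_mul_max_mul_max M u hη hθ.2 hne.symm
end

section
/- Let a < b, N : [a,b]×[a,b] → ℝ continuous, u : [a,b] → ℝ continuous. Then ∫ₐᵇ ∫ₐ^s (∫ₐ^s (s-η)·u(η) dη) · N(s,θ) · (∫ₐ^θ (θ-ζ)·u(ζ) dζ) dθ ds = ∫ₐᵇ ∫ₐᵇ u(s) · K(s,θ) · u(θ) dθ ds, where K(s,θ) = I(s-θ)·∫_s^b ∫_θ^η (η-s)(ζ-θ)·N(η,ζ) dζ dη + I(θ-s)·∫_θ^b ∫_θ^η (η-s)(ζ-θ)·N(η,ζ) dζ dη. -/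
/-!
Both sides only see `N` and `u` on `[a, b]`, so by Tietze we may take them continuous on all
of `ℝ`. Writing `x₂(s) = ∫ₐˢ (s - η) u(η) dη`, Fubini on the triangle `a ≤ η ≤ s ≤ b` gives
`∫ₐᵇ x₂ g = ∫ₐᵇ u(η) ∫_ηᵇ (s - η) g(s) ds dη`. Applied once to the outer `x₂` and once to the
`x₂` inside `𝒫₂ x₂`, and followed by one more triangle swap (over `η ≤ s`, `ζ ≤ s`, which is
where `max η ζ` comes from), this puts the cross term in the form `∫∫ u(s) K(s, θ) u(θ)`,
with `K(s, θ)` the tail integral starting at `max s θ`; off the diagonal this is the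
indicator form of `K`.
-/

open MeasureTheory Set intervalIntegral

section TriangleSwap

variable {E : Type*} [NormedAddCommGroup E] [NormedSpace ℝ E]

theorem intervalIntegral_intervalIntegral_swap_triangle' {a b c : ℝ} (hac : a ≤ c) (hcb : c ≤ b)
    {f : ℝ → ℝ → E} (hf : Continuous (Function.uncurry f)) :
    ∫ s in c..b, ∫ t in a..s, f s t = ∫ t in a..b, ∫ s in max c t..b, f s t := by
  have hind : (Function.uncurry fun s => {t | t ≤ s}.indicator (f s))
      = {p : ℝ × ℝ | p.2 ≤ p.1}.indicator (Function.uncurry f) := by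
    ext ⟨s, t⟩
    simp only [Function.uncurry_apply_pair, indicator, mem_ofPred_eq]
  calc ∫ s in c..b, ∫ t in a..s, f s t
      = ∫ s in c..b, ∫ t in a..b, {t | t ≤ s}.indicator (f s) t := by
        refine integral_congr fun s hs => (intervalIntegral.integral_indicator ?_).symm
        rw [uIcc_of_le hcb] at hs
        exact ⟨hac.trans hs.1, hs.2⟩
    _ = ∫ t in a..b, ∫ s in c..b, {t | t ≤ s}.indicator (f s) t := by
        refine intervalIntegral_intervalIntegral_swap ?_
        rw [hind]
        refine IntegrableOn.indicator ?_ (measurableSet_le measurable_snd measurable_fst)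
        exact (hf.continuousOn.integrableOn_compact (isCompact_uIcc.prod isCompact_uIcc)).mono_set
          (prod_mono uIoc_subset_uIcc uIoc_subset_uIcc)
    _ = ∫ t in a..b, ∫ s in max c t..b, f s t := by
        refine integral_congr fun t ht => ?_
        rw [uIcc_of_le (hac.trans hcb)] at ht
        have hIci : ∀ s, {t | t ≤ s}.indicator (f s) t = (Ici t).indicator (f · t) s := fun s => by
          simp only [indicator, mem_ofPred_eq, mem_Ici]
        simp_rw [hIci]
        rw [integral_of_le hcb, integral_of_le (max_le hcb ht.2),
          setIntegral_indicator measurableSet_Ici, ← Ioc_inter_Ioi]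
        exact setIntegral_congr_set ((ae_eq_refl _).inter Ioi_ae_eq_Ici).symm

theorem intervalIntegral_intervalIntegral_swap_triangle {a b : ℝ} (hab : a ≤ b)
    {f : ℝ → ℝ → E} (hf : Continuous (Function.uncurry f)) :
    ∫ s in a..b, ∫ t in a..s, f s t = ∫ t in a..b, ∫ s in t..b, f s t := by
  rw [intervalIntegral_intervalIntegral_swap_triangle' le_rfl hab hf]
  refine integral_congr fun t ht => ?_
  rw [uIcc_of_le hab] at ht
  rw [max_eq_right ht.1]

end TriangleSwap

@[fun_prop]
theorem continuous_parametric_intervalIntegral_of_continuous_bounds {X E : Type*}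
    [TopologicalSpace X] [NormedAddCommGroup E] [NormedSpace ℝ E] {f : X → ℝ → E}
    (hf : Continuous (Function.uncurry f)) {l r : X → ℝ} (hl : Continuous l) (hr : Continuous r) :
    Continuous fun x => ∫ t in l x..r x, f x t := by
  have hint : ∀ x c d, IntervalIntegrable (f x) volume c d := fun x _ _ =>
    (hf.uncurry_left x).intervalIntegrable _ _
  have : (fun x => ∫ t in l x..r x, f x t)
      = fun x => (∫ t in 0..r x, f x t) - ∫ t in 0..l x, f x t := by
    ext x
    rw [integral_interval_sub_left (hint x _ _) (hint x _ _)]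
  rw [this]
  fun_prop

theorem ContinuousOn.exists_continuous_eqOn {X : Type*} [TopologicalSpace X] [NormalSpace X]
    {s : Set X} (hs : IsClosed s) {f : X → ℝ} (hf : ContinuousOn f s) :
    ∃ g : X → ℝ, Continuous g ∧ EqOn f g s := by
  obtain ⟨g, hg⟩ := ContinuousMap.exists_restrict_eq hs ⟨s.domRestrict f, hf.domRestrict⟩
  exact ⟨g, g.continuous, fun x hx => (DFunLike.congr_fun hg ⟨x, hx⟩).symm⟩

/-- The paper's `x₂`; by Cauchy's formula it is the second primitive of `u` vanishing at `a`. -/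
noncomputable def doublePrimitive (a : ℝ) (u : ℝ → ℝ) (s : ℝ) : ℝ :=
  ∫ η in a..s, (s - η) * u η

theorem continuous_doublePrimitive (a : ℝ) {u : ℝ → ℝ} (hu : Continuous u) :
    Continuous (doublePrimitive a u) := by
  unfold doublePrimitive
  fun_prop

theorem integral_doublePrimitive_mul {a b : ℝ} (hab : a ≤ b) {u g : ℝ → ℝ}
    (hu : Continuous u) (hg : Continuous g) :
    ∫ s in a..b, doublePrimitive a u s * g s = ∫ η in a..b, u η * ∫ s in η..b, (s - η) * g s := by
  calc ∫ s in a..b, doublePrimitive a u s * g s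
      = ∫ s in a..b, ∫ η in a..s, (s - η) * u η * g s := by
        simp only [doublePrimitive, intervalIntegral.integral_mul_const]
    _ = ∫ η in a..b, ∫ s in η..b, (s - η) * u η * g s :=
        intervalIntegral_intervalIntegral_swap_triangle hab (by fun_prop)
    _ = ∫ η in a..b, u η * ∫ s in η..b, (s - η) * g s := by
        refine integral_congr fun η _ => ?_
        rw [← intervalIntegral.integral_const_mul]
        exact integral_congr fun s _ => by ring

/-- The paper's `⟨x₂, 𝒫₂ x₂⟩`. -/
noncomputable def crossTerm (a b : ℝ) (N : ℝ → ℝ → ℝ) (u : ℝ → ℝ) : ℝ :=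
  ∫ s in a..b, ∫ θ in a..s, doublePrimitive a u s * N s θ * doublePrimitive a u θ

noncomputable def tailKernel (b : ℝ) (N : ℝ → ℝ → ℝ) (s θ c : ℝ) : ℝ :=
  ∫ η in c..b, ∫ ζ in θ..η, (η - s) * (ζ - θ) * N η ζ

theorem crossTerm_eq_of_continuous {a b : ℝ} (hab : a ≤ b) {N : ℝ → ℝ → ℝ} {u : ℝ → ℝ}
    (hN : Continuous fun p : ℝ × ℝ => N p.1 p.2) (hu : Continuous u) :
    crossTerm a b N u = ∫ s in a..b, ∫ θ in a..b, u s * tailKernel b N s θ (max s θ) * u θ := by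
  set x := doublePrimitive a u
  have hx : Continuous x := continuous_doublePrimitive a hu
  calc crossTerm a b N u = ∫ s in a..b, x s * ∫ θ in a..s, x θ * N s θ := by
        refine integral_congr fun s _ => ?_
        rw [← intervalIntegral.integral_const_mul]
        exact integral_congr fun θ _ => by ring
    _ = ∫ η in a..b, u η * ∫ s in η..b, (s - η) * ∫ θ in a..s, x θ * N s θ :=
        integral_doublePrimitive_mul hab hu (by fun_prop)
    _ = ∫ η in a..b, u η *
          ∫ s in η..b, (s - η) * ∫ ζ in a..s, u ζ * ∫ θ in ζ..s, (θ - ζ) * N s θ := by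
        refine integral_congr fun η hη => ?_
        rw [uIcc_of_le hab] at hη
        refine congrArg _ (integral_congr fun s hs => ?_)
        rw [uIcc_of_le hη.2] at hs
        rw [integral_doublePrimitive_mul (hη.1.trans hs.1) hu (by fun_prop)]
    _ = ∫ η in a..b, u η * ∫ ζ in a..b, u ζ * tailKernel b N η ζ (max η ζ) := by
        refine integral_congr fun η hη => ?_
        rw [uIcc_of_le hab] at hη
        simp only [← intervalIntegral.integral_const_mul]
        rw [intervalIntegral_intervalIntegral_swap_triangle' hη.1 hη.2 (by fun_prop)]
        refine integral_congr fun ζ _ => ?_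
        simp only [tailKernel, ← intervalIntegral.integral_const_mul]
        exact integral_congr fun s _ => integral_congr fun θ _ => by ring
    _ = ∫ s in a..b, ∫ θ in a..b, u s * tailKernel b N s θ (max s θ) * u θ := by
        refine integral_congr fun s _ => ?_
        rw [← intervalIntegral.integral_const_mul]
        exact integral_congr fun θ _ => by ring

theorem doublePrimitive_congr {a b s : ℝ} {u u' : ℝ → ℝ} (hu : EqOn u u' (Icc a b))
    (hs : s ∈ Icc a b) : doublePrimitive a u s = doublePrimitive a u' s :=
  integral_congr fun η hη => by
    rw [hu (uIcc_subset_Icc (left_mem_Icc.2 (hs.1.trans hs.2)) hs hη)]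

theorem crossTerm_congr {a b : ℝ} (hab : a ≤ b) {N N' : ℝ → ℝ → ℝ} {u u' : ℝ → ℝ}
    (hN : ∀ x ∈ Icc a b, ∀ y ∈ Icc a b, N x y = N' x y) (hu : EqOn u u' (Icc a b)) :
    crossTerm a b N u = crossTerm a b N' u' := by
  refine integral_congr fun s hs => integral_congr fun θ hθ => ?_
  rw [uIcc_of_le hab] at hs
  have hθ' : θ ∈ Icc a b := uIcc_subset_Icc (left_mem_Icc.2 hab) hs hθ
  simp only [doublePrimitive_congr hu hs, doublePrimitive_congr hu hθ', hN s hs θ hθ']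

theorem tailKernel_congr {a b s θ c : ℝ} {N N' : ℝ → ℝ → ℝ}
    (hN : ∀ x ∈ Icc a b, ∀ y ∈ Icc a b, N x y = N' x y) (hθ : θ ∈ Icc a b) (hc : c ∈ Icc a b) :
    tailKernel b N s θ c = tailKernel b N' s θ c := by
  refine integral_congr fun η hη => integral_congr fun ζ hζ => ?_
  have hη' : η ∈ Icc a b := uIcc_subset_Icc hc (right_mem_Icc.2 (hc.1.trans hc.2)) hη
  simp only [hN η hη' ζ (uIcc_subset_Icc hθ hη' hζ)]

/-- The paper's kernel `K`. -/
noncomputable def quadKernel (b : ℝ) (N : ℝ → ℝ → ℝ) (s θ : ℝ) : ℝ :=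
  ind (s - θ) * tailKernel b N s θ s + ind (θ - s) * tailKernel b N s θ θ

noncomputable def kernelQuadForm (a b : ℝ) (N : ℝ → ℝ → ℝ) (u : ℝ → ℝ) : ℝ :=
  ∫ s in a..b, ∫ θ in a..b, u s * quadKernel b N s θ * u θ

theorem kernelQuadForm_congr {a b : ℝ} (hab : a ≤ b) {N N' : ℝ → ℝ → ℝ} {u u' : ℝ → ℝ}
    (hN : ∀ x ∈ Icc a b, ∀ y ∈ Icc a b, N x y = N' x y) (hu : EqOn u u' (Icc a b)) :
    kernelQuadForm a b N u = kernelQuadForm a b N' u' := by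
  refine integral_congr fun s hs => integral_congr fun θ hθ => ?_
  rw [uIcc_of_le hab] at hs hθ
  simp only [quadKernel, hu hs, hu hθ, tailKernel_congr hN hθ hs, tailKernel_congr hN hθ hθ]

theorem ind_sub_mul_add_ind_sub_mul {x y : ℝ} (h : x ≠ y) (F : ℝ → ℝ) :
    ind (x - y) * F x + ind (y - x) * F y = F (max x y) := by
  rcases h.lt_or_gt with h | h <;> simp [ind, h.not_ge, h.le]

theorem kernelQuadForm_eq_tailKernel_max (a b : ℝ) (N : ℝ → ℝ → ℝ) (u : ℝ → ℝ) :
    kernelQuadForm a b N u =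
      ∫ s in a..b, ∫ θ in a..b, u s * tailKernel b N s θ (max s θ) * u θ := by
  refine integral_congr fun s _ => integral_congr_ae ?_
  -- on the diagonal both indicators are `1`, but the diagonal is null
  filter_upwards [Measure.ae_ne volume s] with θ hθ _
  rw [quadKernel, ind_sub_mul_add_ind_sub_mul (Ne.symm hθ) (tailKernel b N s θ)]

theorem stmt16 (a b : ℝ) (hab : a < b) (N : ℝ → ℝ → ℝ) (u : ℝ → ℝ)
    (hN : ContinuousOn (fun p : ℝ × ℝ => N p.1 p.2) (Set.Icc a b ×ˢ Set.Icc a b))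
    (hu : ContinuousOn u (Set.Icc a b)) :
    ∫ s in a..b, ∫ θ in a..s,
        (∫ η in a..s, (s - η) * u η) * N s θ * (∫ ζ in a..θ, (θ - ζ) * u ζ)
      = ∫ s in a..b, ∫ θ in a..b,
          u s * (ind (s - θ) * (∫ η in s..b, ∫ ζ in θ..η, (η - s) * (ζ - θ) * N η ζ)
                 + ind (θ - s) * (∫ η in θ..b, ∫ ζ in θ..η, (η - s) * (ζ - θ) * N η ζ)) * u θ := by
  obtain ⟨Nc, hNc, hNNc⟩ := hN.exists_continuous_eqOn (isClosed_Icc.prod isClosed_Icc)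
  obtain ⟨uc, huc, huuc⟩ := hu.exists_continuous_eqOn isClosed_Icc
  have hN' : ∀ x ∈ Icc a b, ∀ y ∈ Icc a b, N x y = Nc (x, y) := fun x hx y hy =>
    @hNNc (x, y) ⟨hx, hy⟩
  change crossTerm a b N u = kernelQuadForm a b N u
  rw [crossTerm_congr hab.le hN' huuc, kernelQuadForm_congr hab.le hN' huuc,
    crossTerm_eq_of_continuous hab.le hNc huc, kernelQuadForm_eq_tailKernel_max]
end
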